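/- Entropy lower bound: Let μ be a nonzero finite Borel measure on S^{n-1} not concentrated in any closed hemisphere, and let Kᵢ ∈ 𝒦ⁿ_o be convex bodies with R_{Kᵢ} = h_{Kᵢ}(vᵢ) for some vᵢ ∈ S^{n-1} with vᵢ → v₀. Then there exist constants C_{μ,v₀} ∈ (0,1) and C̃_{μ,v₀} ∈ ℝ, independent of i, such that for all sufficiently large i, (1/|μ|)∫_{S^{n-1}} log h_{Kᵢ} dμ ≥ log r_{Kᵢ} + C_{μ,v₀} log(R_{Kᵢ}/r_{Kᵢ}) + C̃_{μ,v₀}. -/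

import Mathlib

open MeasureTheory Real Set Filter
open scoped RealInnerProductSpace ENNReal Topology

noncomputable section

/-- `ℝⁿ` as Euclidean space. -/
abbrev En (n : ℕ) := EuclideanSpace ℝ (Fin n)

/-- The Beta function `B(x,y) = Γ(x)Γ(y)/Γ(x+y)`. -/
def betaFn (x y : ℝ) : ℝ := Real.Gamma x * Real.Gamma y / Real.Gamma (x + y)

/-- Normalization constant `q_{b,m}` of the generalized Gaussian density. -/
def qConst (n : ℕ) (b m : ℝ) : ℝ :=
  if b < 0 then
    (m / n) * |b / m| ^ ((n : ℝ) / m) * Real.Gamma ((n : ℝ) / 2 + 1) /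
      (Real.pi ^ ((n : ℝ) / 2) * betaFn ((n : ℝ) / m) (1 - 1 / b))
  else if b = 0 then
    Real.Gamma ((n : ℝ) / 2 + 1) /
      (Real.pi ^ ((n : ℝ) / 2) * m ^ ((n : ℝ) / m) * Real.Gamma ((n : ℝ) / m + 1))
  else
    (m / n) * (b / m) ^ ((n : ℝ) / m) * Real.Gamma ((n : ℝ) / 2 + 1) /
      (Real.pi ^ ((n : ℝ) / 2) * betaFn ((n : ℝ) / m) (1 / b - (n : ℝ) / m))

/-- The generalized Gaussian density `g_{b,m}`. -/
def gg (n : ℕ) (b m : ℝ) (x : En n) : ℝ :=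
  if b = 0 then qConst n b m * Real.exp (-‖x‖ ^ m / m)
  else qConst n b m * (max (1 - b / m * ‖x‖ ^ m) 0) ^ (1 / b - (n : ℝ) / m - 1)

/-- The generalized Gaussian volume `γ_{b,m}(K)`. -/
def gvol (n : ℕ) (b m : ℝ) (K : Set (En n)) : ℝ := ∫ x in K, gg n b m x

/-- The support function `h_K`. -/
def sFn (n : ℕ) (K : Set (En n)) (v : En n) : ℝ := sSup ((fun x => ⟪x, v⟫) '' K)

/-- The unit sphere `S^{n-1}`. -/
def sph (n : ℕ) : Set (En n) := Metric.sphere (0 : En n) 1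

/-- The Wulff shape `[h]` of `h`. -/
def wulff (n : ℕ) (h : En n → ℝ) : Set (En n) := {x | ∀ v ∈ sph n, ⟪x, v⟫ ≤ h v}

/-- `R_K = max {|x| : x ∈ K}`. -/
def RK (n : ℕ) (K : Set (En n)) : ℝ := sSup ((fun x => ‖x‖) '' K)

/-- `r_K = min {|x| : x ∈ ∂K}`. -/
def rK (n : ℕ) (K : Set (En n)) : ℝ := sInf ((fun x => ‖x‖) '' frontier K)

/-- The radial function `ρ_K`. -/
def radF (n : ℕ) (K : Set (En n)) (u : En n) : ℝ := sSup {r : ℝ | 0 ≤ r ∧ r • u ∈ K}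

/-- `K` is a convex body containing the origin in its interior (class `𝒦ⁿ_o`). -/
def isBody (n : ℕ) (K : Set (En n)) : Prop :=
  IsCompact K ∧ Convex ℝ K ∧ (0 : En n) ∈ interior K

-- The Gauss map: the unique unit outer normal at `x ∈ ∂K`, when it exists (junk otherwise).
open scoped Classical in
def outerN (n : ℕ) (K : Set (En n)) (x : En n) : En n :=
  if h : ∃! v : En n, ‖v‖ = 1 ∧ ∀ y ∈ K, ⟪y, v⟫ ≤ ⟪x, v⟫ then h.choose else 0

/-- The generalized Gaussian cone measure `G_{b,m}(K, ·)`, as a Borel measure on `ℝⁿ`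
concentrated on the unit sphere: the pushforward under the Gauss map of the weighted
`(n-1)`-Hausdorff measure `(x · ν_K(x)) g_{b,m}(x) dℋ^{n-1}` on `∂K`. -/
def coneM (n : ℕ) (b m : ℝ) (K : Set (En n)) : Measure (En n) :=
  Measure.map (outerN n K)
    (((μH[(n : ℝ) - 1]).restrict (frontier K)).withDensity
      fun x => ENNReal.ofReal (⟪x, outerN n K x⟫ * gg n b m x))

/-- `μ` is not concentrated in any closed hemisphere. -/
def notConc (n : ℕ) (μ : Measure (En n)) : Prop :=
  ∀ u ∈ sph n, 0 < ∫ v, max ⟪v, u⟫ 0 ∂μ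

/-! Since `0` is interior to `K`, the ball of radius `r_K` lies in `K`, so `h_K ≥ r_K` on the
sphere. Since `R_K vᵢ ∈ K` and `vᵢ → v₀`, on a cap `Ω = {w : α ≤ w · v₀}` of positive `μ`-measure
one has `h_K(w) ≥ R_K (vᵢ · w) ≥ (α/2) R_K` for large `i`. Integrating `log h_K` against these two
lower bounds gives the estimate with `C = μ(Ω)/|μ|`, which is `< 1` because the opposite open
hemisphere also has positive measure. -/

theorem IsPreconnected.inter_frontier_nonempty_of_not_subset {X : Type*} [TopologicalSpace X]
    {s t : Set X} (hs : IsPreconnected s) (hst : (s ∩ interior t).Nonempty) (hts : ¬s ⊆ t) :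
    (s ∩ frontier t).Nonempty := by
  by_contra hfr
  refine hts ((hs.subset_of_closure_inter_subset isOpen_interior hst ?_).trans interior_subset)
  rintro x ⟨hxc, hxs⟩
  by_contra hxi
  exact hfr ⟨x, hxs, closure_mono interior_subset hxc, hxi⟩

theorem exists_pos_measure_setOf_le_ne_zero {α : Type*} [MeasurableSpace α] {μ : Measure α}
    {f : α → ℝ} (h : μ {x | 0 < f x} ≠ 0) : ∃ a > 0, μ {x | a ≤ f x} ≠ 0 := by
  by_contra! hzero
  refine h (measure_mono_null (fun x hx => ?_)
    (measure_iUnion_null fun k : ℕ => hzero (1 / (k + 1)) (by positivity)))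
  obtain ⟨k, hk⟩ := exists_nat_one_div_lt (show 0 < f x from hx)
  exact mem_iUnion.2 ⟨k, hk.le⟩

theorem le_integral_of_ae_le_of_ae_le_on {α : Type*} [MeasurableSpace α] {μ : Measure α}
    [IsFiniteMeasure μ] {f : α → ℝ} {s : Set α} {a b : ℝ} (hs : MeasurableSet s)
    (hf : Integrable f μ) (ha : ∀ᵐ x ∂μ, a ≤ f x) (hb : ∀ᵐ x ∂μ, x ∈ s → b ≤ f x) :
    μ.real univ * a + μ.real s * (b - a) ≤ ∫ x, f x ∂μ := by
  have hstep : Integrable (s.indicator fun _ => b - a) μ := (integrable_const _).indicator hs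
  calc μ.real univ * a + μ.real s * (b - a)
      = ∫ x, (a + s.indicator (fun _ => b - a) x) ∂μ := by
        rw [integral_add (integrable_const _) hstep, integral_const, integral_indicator_const _ hs,
          smul_eq_mul, smul_eq_mul]
    _ ≤ ∫ x, f x ∂μ := by
        refine integral_mono_ae ((integrable_const _).add hstep) hf ?_
        filter_upwards [ha, hb] with x hxa hxb
        by_cases hx : x ∈ s
        · simp only [indicator_of_mem hx]
          linarith [hxb hx]
        · simpa only [indicator_of_notMem hx, add_zero] using hxa

variable {n : ℕ}

theorem mem_sph_iff {w : En n} : w ∈ sph n ↔ ‖w‖ = 1 := mem_sphere_zero_iff_norm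

theorem measurableSet_setOf_le_inner (α : ℝ) (v₀ : En n) :
    MeasurableSet {w : En n | α ≤ ⟪w, v₀⟫} :=
  measurableSet_le measurable_const (continuous_id.inner continuous_const).measurable

theorem notConc.measure_inner_pos {μ : Measure (En n)} (hμ : notConc n μ) {u : En n}
    (hu : u ∈ sph n) : 0 < μ {w | 0 < ⟪w, u⟫} := by
  refine pos_iff_ne_zero.2 fun h0 => (hμ u hu).ne' (integral_eq_zero_of_ae ?_)
  filter_upwards [measure_eq_zero_iff_ae_notMem.1 h0] with w hw
  exact max_eq_right (not_lt.1 hw)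

theorem notConc.exists_measureReal_cap_mem_Ioo {μ : Measure (En n)} [IsFiniteMeasure μ]
    (hμ : notConc n μ) {v₀ : En n} (hv₀ : v₀ ∈ sph n) :
    ∃ α > 0, μ.real {w | α ≤ ⟪w, v₀⟫} ∈ Ioo 0 (μ.real univ) := by
  obtain ⟨α, hα, hΩ⟩ := exists_pos_measure_setOf_le_ne_zero (hμ.measure_inner_pos hv₀).ne'
  refine ⟨α, hα, ENNReal.toReal_pos hΩ (measure_ne_top _ _), ?_⟩
  have hΩc : 0 < μ.real {w | α ≤ ⟪w, v₀⟫}ᶜ := by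
    refine ENNReal.toReal_pos ((hμ.measure_inner_pos (u := -v₀) ?_).trans_le
      (measure_mono fun w hw => ?_)).ne' (measure_ne_top _ _)
    · simpa [mem_sph_iff] using hv₀
    · simp only [mem_ofPred_eq, inner_neg_right, neg_pos, mem_compl_iff, not_le] at hw ⊢
      linarith
  rw [measureReal_compl (measurableSet_setOf_le_inner α v₀)] at hΩc
  linarith

theorem rK_nonneg (K : Set (En n)) : 0 ≤ rK n K :=
  Real.sInf_nonneg (by rintro _ ⟨x, _, rfl⟩; exact norm_nonneg x)

namespace isBody

variable {K : Set (En n)} (hK : isBody n K)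
include hK

theorem nonempty : K.Nonempty := ⟨0, interior_subset hK.2.2⟩

theorem norm_le_RK {x : En n} (hx : x ∈ K) : ‖x‖ ≤ RK n K := by
  obtain ⟨C, hC⟩ := isBounded_iff_forall_norm_le.1 hK.1.isBounded
  exact le_csSup ⟨C, by rintro _ ⟨y, hy, rfl⟩; exact hC y hy⟩ ⟨x, hx, rfl⟩

theorem inner_le_sFn {x : En n} (hx : x ∈ K) (w : En n) : ⟪x, w⟫ ≤ sFn n K w := by
  refine le_csSup ⟨RK n K * ‖w‖, ?_⟩ ⟨x, hx, rfl⟩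
  rintro _ ⟨y, hy, rfl⟩
  exact (real_inner_le_norm y w).trans (by gcongr; exact hK.norm_le_RK hy)

theorem sFn_le_add (a b : En n) : sFn n K a ≤ sFn n K b + RK n K * ‖a - b‖ := by
  refine csSup_le (hK.nonempty.image _) ?_
  rintro _ ⟨x, hx, rfl⟩
  calc ⟪x, a⟫ = ⟪x, b⟫ + ⟪x, a - b⟫ := by rw [inner_sub_right]; ring
    _ ≤ sFn n K b + RK n K * ‖a - b‖ := by
        gcongr
        · exact hK.inner_le_sFn hx b
        · exact (real_inner_le_norm x _).trans (by gcongr; exact hK.norm_le_RK hx)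

theorem sFn_le_RK {w : En n} (hw : ‖w‖ = 1) : sFn n K w ≤ RK n K := by
  refine csSup_le (hK.nonempty.image _) ?_
  rintro _ ⟨x, hx, rfl⟩
  simpa [hw] using (real_inner_le_norm x w).trans (by rw [hw, mul_one]; exact hK.norm_le_RK hx)

theorem continuous_sFn : Continuous (sFn n K) :=
  (LipschitzWith.of_le_add_mul (RK n K).toNNReal fun a b => by
    rw [dist_eq_norm]
    exact (hK.sFn_le_add a b).trans (by gcongr; exact Real.le_coe_toNNReal _)).continuous

theorem closedBall_rK_subset : Metric.closedBall 0 (rK n K) ⊆ K := by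
  have hball : Metric.ball 0 (rK n K) ⊆ K := by
    intro x hx
    by_contra hxK
    obtain ⟨y, hyx, hyK⟩ := (convex_segment (0 : En n) x).isPreconnected
      |>.inter_frontier_nonempty_of_not_subset ⟨0, left_mem_segment ℝ 0 x, hK.2.2⟩
        fun h => hxK (h (right_mem_segment ℝ 0 x))
    have hyx : ‖y‖ ≤ ‖x‖ := by
      simpa using (convex_closedBall (0 : En n) ‖x‖).segment_subset
        (Metric.mem_closedBall_self (norm_nonneg x)) (mem_closedBall_zero_iff.2 le_rfl) hyx
    have hry : rK n K ≤ ‖y‖ :=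
      csInf_le ⟨0, by rintro _ ⟨z, _, rfl⟩; exact norm_nonneg z⟩ ⟨y, hyK, rfl⟩
    rw [mem_ball_zero_iff] at hx
    linarith
  rcases eq_or_ne (rK n K) 0 with h0 | h0
  · simpa [h0] using interior_subset hK.2.2
  · rw [← closure_ball 0 h0]
    exact closure_minimal hball hK.1.isClosed

theorem rK_le_sFn {w : En n} (hw : ‖w‖ = 1) : rK n K ≤ sFn n K w := by
  have hmem : rK n K • w ∈ K := by
    apply hK.closedBall_rK_subset
    rw [mem_closedBall_zero_iff, norm_smul, hw, mul_one, Real.norm_of_nonneg (rK_nonneg K)]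
  simpa [real_inner_smul_left, real_inner_self_eq_norm_sq, hw] using hK.inner_le_sFn hmem w

theorem rK_pos [Nontrivial (En n)] : 0 < rK n K := by
  obtain ⟨ε, hε, hball⟩ := Metric.isOpen_iff.1 isOpen_interior 0 hK.2.2
  have hfr : (frontier K).Nonempty := nonempty_frontier_iff.2
    ⟨hK.nonempty, fun h => NormedSpace.unbounded_univ ℝ (En n) (h ▸ hK.1.isBounded)⟩
  refine hε.trans_le (le_csInf (hfr.image _) ?_)
  rintro _ ⟨x, hx, rfl⟩
  by_contra! hxε
  exact hx.2 (hball (mem_ball_zero_iff.2 hxε))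

theorem RK_smul_mem {u : En n} (hu : ‖u‖ = 1) (hmax : sFn n K u = RK n K) :
    RK n K • u ∈ K := by
  obtain ⟨x, hxK, hxmax⟩ := hK.1.exists_isMaxOn hK.nonempty
    ((continuous_id.inner continuous_const).continuousOn : ContinuousOn (⟪·, u⟫) K)
  have hxu : ⟪x, u⟫ = RK n K := by
    rw [← hmax, sFn, (IsGreatest.csSup_eq ⟨mem_image_of_mem _ hxK, ?_⟩)]
    rintro _ ⟨y, hy, rfl⟩
    exact hxmax hy
  have hxn : ‖x‖ = RK n K := le_antisymm (hK.norm_le_RK hxK)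
    (by simpa [hu, hxu] using real_inner_le_norm x u)
  have hx : ‖u‖ • x = ‖x‖ • u := inner_eq_norm_mul_iff_real.1 (by rw [hu, hxn, hxu, mul_one])
  rw [hu, one_smul, hxn] at hx
  exact hx ▸ hxK

theorem RK_mul_inner_le_sFn {u : En n} (hu : ‖u‖ = 1) (hmax : sFn n K u = RK n K) (w : En n) :
    RK n K * ⟪u, w⟫ ≤ sFn n K w := by
  simpa [real_inner_smul_left] using hK.inner_le_sFn (hK.RK_smul_mem hu hmax) w

end isBody

theorem integrable_log_sFn {μ : Measure (En n)} [IsFiniteMeasure μ] (hμs : μ (sph n)ᶜ = 0)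
    [Nontrivial (En n)] {K : Set (En n)} (hK : isBody n K) :
    Integrable (fun w => Real.log (sFn n K w)) μ := by
  refine .of_bound (Real.measurable_log.comp hK.continuous_sFn.measurable).aestronglyMeasurable
    (max |Real.log (rK n K)| |Real.log (RK n K)|) ?_
  filter_upwards [measure_eq_zero_iff_ae_notMem.1 hμs] with w hw
  have hw : ‖w‖ = 1 := by simpa [mem_sph_iff] using hw
  have hrw := hK.rK_le_sFn hw
  exact abs_le_max_abs_abs (Real.log_le_log hK.rK_pos hrw)
    (Real.log_le_log (hK.rK_pos.trans_le hrw) (hK.sFn_le_RK hw))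

theorem integral_log_sFn_ge {μ : Measure (En n)} [IsFiniteMeasure μ] (hμs : μ (sph n)ᶜ = 0)
    {K : Set (En n)} (hK : isBody n K) {u v₀ : En n} (hu : ‖u‖ = 1)
    (hmax : sFn n K u = RK n K) {α : ℝ} (hα : 0 < α) (huv : dist u v₀ ≤ α / 2) :
    μ.real univ * Real.log (rK n K) +
        μ.real {w | α ≤ ⟪w, v₀⟫} * (Real.log (α / 2) + Real.log (RK n K / rK n K)) ≤
      ∫ w, Real.log (sFn n K w) ∂μ := by
  have : Nontrivial (En n) := ⟨⟨u, 0, ne_zero_of_norm_ne_zero (by simp [hu])⟩⟩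
  have hr := hK.rK_pos
  have hR : 0 < RK n K := hr.trans_le ((hK.rK_le_sFn hu).trans (hK.sFn_le_RK hu))
  have hcap : ∀ w ∈ sph n, α ≤ ⟪w, v₀⟫ → α / 2 * RK n K ≤ sFn n K w := by
    intro w hw hαw
    have huw : α / 2 ≤ ⟪u, w⟫ := by
      have := real_inner_le_norm (v₀ - u) w
      rw [inner_sub_left, mem_sph_iff.1 hw, mul_one, norm_sub_rev, ← dist_eq_norm,
        real_inner_comm] at this
      linarith
    calc α / 2 * RK n K ≤ RK n K * ⟪u, w⟫ := by rw [mul_comm]; gcongr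
      _ ≤ sFn n K w := hK.RK_mul_inner_le_sFn hu hmax w
  have hsph := measure_eq_zero_iff_ae_notMem.1 hμs
  have hlog : Real.log (α / 2 * RK n K) - Real.log (rK n K) =
      Real.log (α / 2) + Real.log (RK n K / rK n K) := by
    rw [Real.log_mul (by positivity) hR.ne', Real.log_div hR.ne' hr.ne']
    ring
  rw [← hlog]
  refine le_integral_of_ae_le_of_ae_le_on (measurableSet_setOf_le_inner α v₀)
    (integrable_log_sFn hμs hK) ?_ ?_
  · filter_upwards [hsph] with w hw
    exact Real.log_le_log hr (hK.rK_le_sFn (by simpa [mem_sph_iff] using hw))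
  · filter_upwards [hsph] with w hw hαw
    exact Real.log_le_log (by positivity) (hcap w (by simpa using hw) hαw)

theorem entropy_lower_bound_general (n : ℕ) (μ : Measure (En n))
    [IsFiniteMeasure μ] (hμs : μ (sph n)ᶜ = 0) (hμ : notConc n μ)
    (K : ℕ → Set (En n)) (hK : ∀ i, isBody n (K i))
    (v : ℕ → En n) (hv : ∀ i, v i ∈ sph n)
    (hmax : ∀ i, sFn n (K i) (v i) = RK n (K i))
    (v₀ : En n) (hv₀ : v₀ ∈ sph n) (hconv : Tendsto v atTop (𝓝 v₀)) :
    ∃ C ∈ Ioo (0 : ℝ) 1, ∃ C' : ℝ, ∃ N : ℕ, ∀ i ≥ N,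
      Real.log (rK n (K i)) + C * Real.log (RK n (K i) / rK n (K i)) + C' ≤
        (1 / (μ Set.univ).toReal) * ∫ w, Real.log (sFn n (K i) w) ∂μ := by
  obtain ⟨α, hα, hΩ_pos, hΩ_lt⟩ := hμ.exists_measureReal_cap_mem_Ioo hv₀
  have hM : 0 < μ.real univ := hΩ_pos.trans hΩ_lt
  set C := μ.real {w | α ≤ ⟪w, v₀⟫} / μ.real univ with hC
  refine ⟨C, ⟨div_pos hΩ_pos hM, (div_lt_one hM).2 hΩ_lt⟩, C * Real.log (α / 2),
    eventually_atTop.1 ?_⟩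
  filter_upwards [hconv.eventually (Metric.closedBall_mem_nhds v₀ (half_pos hα))] with i hi
  have hbound := integral_log_sFn_ge hμs (hK i) (mem_sph_iff.1 (hv i)) (hmax i) hα hi
  rw [← measureReal_def, one_div, ← div_eq_inv_mul, le_div_iff₀ hM]
  refine le_of_eq_of_le ?_ hbound
  rw [hC]
  field_simp
  ring

/-- entropy lower bound
`(1/|μ|) ∫ log h_{Kᵢ} dμ ≥ log r_{Kᵢ} + C log (R_{Kᵢ}/r_{Kᵢ}) + C̃` for large `i`. -/
theorem entropy_lower_bound (n : ℕ) (hn : 0 < n) (μ : Measure (En n))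
    [IsFiniteMeasure μ] (hμs : μ (sph n)ᶜ = 0) (hμ0 : μ ≠ 0) (hμ : notConc n μ)
    (K : ℕ → Set (En n)) (hK : ∀ i, isBody n (K i))
    (v : ℕ → En n) (hv : ∀ i, v i ∈ sph n)
    (hmax : ∀ i, sFn n (K i) (v i) = RK n (K i))
    (v₀ : En n) (hv₀ : v₀ ∈ sph n) (hconv : Tendsto v atTop (𝓝 v₀)) :
    ∃ C ∈ Ioo (0 : ℝ) 1, ∃ C' : ℝ, ∃ N : ℕ, ∀ i ≥ N,
      Real.log (rK n (K i)) + C * Real.log (RK n (K i) / rK n (K i)) + C' ≤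
        (1 / (μ Set.univ).toReal) * ∫ w, Real.log (sFn n (K i) w) ∂μ :=
  entropy_lower_bound_general n μ hμs hμ K hK v hv hmax v₀ hv₀ hconv
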